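/- In the setting of the previous lemma (q(u₊) = 0, q(u₋) = u₋ ⊗ u₋), the map S : V^⊗L → V^⊗(L+1) defined by S(ψ) = u₊ ⊗ ψ satisfies the anticommutation relation S∘Q = -Q∘S on V^⊗L for every L ≥ 1, and hence descends to a well-defined map S♯ : H^L → H^{L+1} on cohomology given by S♯[ψ] = [u₊ ⊗ ψ]. Moreover S♯ is a bijection for every L ≥ 1. -/

import Mathlib

open Matrix

noncomputable section

/-- Matrix of the operator `q_j` that applies the local supercharge (with matrix
elements `qm a b t`, i.e. `q e_t = ∑ a b, qm a b t • e_a ⊗ e_b`) on the `j`-th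
tensor factor of `V^⊗L`, `V = ℂ²`. -/
def qjMat (qm : Fin 2 → Fin 2 → Fin 2 → ℂ) (L : ℕ) (j : Fin L) :
    Matrix (Fin (L + 1) → Fin 2) (Fin L → Fin 2) ℂ := fun s s' =>
  if ∀ i : Fin L, i ≠ j → s (Fin.succAbove j.succ i) = s' i then
    qm (s j.castSucc) (s j.succ) (s' j)
  else 0

/-- The supercharge `Q = ∑_{j=1}^L (-1)^j q_j : V^⊗L → V^⊗(L+1)`. -/
def Qop (qm : Fin 2 → Fin 2 → Fin 2 → ℂ) (L : ℕ) :
    ((Fin L → Fin 2) → ℂ) →ₗ[ℂ] ((Fin (L + 1) → Fin 2) → ℂ) :=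
  (∑ j : Fin L, ((-1 : ℂ) ^ ((j : ℕ) + 1)) • qjMat qm L j).mulVecLin

/-- The map `S : V^⊗L → V^⊗(L+1)`, `S ψ = u ⊗ ψ`. -/
def Sop (u : Fin 2 → ℂ) (L : ℕ) :
    ((Fin L → Fin 2) → ℂ) →ₗ[ℂ] ((Fin (L + 1) → Fin 2) → ℂ) :=
  Matrix.mulVecLin
    (Matrix.of fun (s : Fin (L + 1) → Fin 2) (s' : Fin L → Fin 2) =>
      if ∀ i : Fin L, s i.succ = s' i then u (s 0) else 0)


/-!
Let `(w₊, w₋)` be the basis dual to `(u₊, u₋)`. The two conditions on `q` say that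
`q = u₋ ⊗ u₋ ⊗ w₋`, and expanding `Q` along the first tensor factor gives the Leibniz rule
`Q (u ⊗ ψ) = q u ⊗ ψ - u ⊗ Q ψ`; with `q u₊ = 0` this is the anticommutation `S Q = - Q S`.
Every `φ` splits as `φ = u₊ ⊗ φ₊ + u₋ ⊗ φ₋` with `φ± = (w± ⊗ 1) φ`, and contracting `Q φ` with
`w±` gives `(w₊ ⊗ 1) Q φ = - Q φ₊` and `(w₋ ⊗ 1) Q φ = - u₋ ⊗ φ₋ - Q φ₋`. So if `Q φ = 0`, then
`φ₊` is closed and `u₋ ⊗ φ₋ = Q (-φ₋)` is exact, whence `[φ] = S♯ [φ₊]`; and if `u₊ ⊗ ψ = Q γ`,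
contracting with `w₊` gives `ψ = Q (-(w₊ ⊗ 1) γ)`, which vanishes for `L = 1` since `Q = 0`
on `V^⊗0`.
-/

lemma sum_ite_forall_ne_eq_sum_update {L : ℕ} (base : Fin L → Fin 2) (j : Fin L)
    (G : (Fin L → Fin 2) → ℂ) :
    (∑ s' : Fin L → Fin 2, if ∀ i, i ≠ j → base i = s' i then G s' else 0)
      = ∑ t : Fin 2, G (Function.update base j t) := by
  classical
  have hagree : ∀ s' : Fin L → Fin 2, (∀ i, i ≠ j → base i = s' i) →
      Function.update base j (s' j) = s' := fun s' hs' => by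
    funext i
    rcases eq_or_ne i j with rfl | hi
    · simp
    · rw [Function.update_of_ne hi, hs' i hi]
  rw [← Finset.sum_filter]
  refine Finset.sum_nbij' (fun s' => s' j) (Function.update base j) (by simp) ?_ ?_ (by simp) ?_
  · intro t _
    simp +contextual [Function.update_of_ne]
  · intro s' hs'
    exact hagree s' (Finset.mem_filter.mp hs').2
  · intro s' hs'
    rw [hagree s' (Finset.mem_filter.mp hs').2]

lemma Qop_apply (qm : Fin 2 → Fin 2 → Fin 2 → ℂ) (L : ℕ)
    (ψ : (Fin L → Fin 2) → ℂ) (s : Fin (L + 1) → Fin 2) :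
    Qop qm L ψ s = ∑ j : Fin L, (-1 : ℂ) ^ ((j : ℕ) + 1) *
      ∑ t : Fin 2, qm (s j.castSucc) (s j.succ) t *
        ψ (Function.update (fun i => s (Fin.succAbove j.succ i)) j t) := by
  simp only [Qop, mulVecLin_apply, mulVec, dotProduct, Matrix.sum_apply,
    Matrix.smul_apply, smul_eq_mul, Finset.sum_mul]
  rw [Finset.sum_comm]
  refine Finset.sum_congr rfl fun j _ => ?_
  simp only [qjMat, mul_assoc, mul_ite, ite_mul, mul_zero, zero_mul]
  rw [sum_ite_forall_ne_eq_sum_update, Finset.mul_sum]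
  simp

lemma Sop_apply (u : Fin 2 → ℂ) (L : ℕ) (ψ : (Fin L → Fin 2) → ℂ)
    (x : Fin (L + 1) → Fin 2) :
    Sop u L ψ x = u (x 0) * ψ (Fin.tail x) := by
  simp only [Sop, mulVecLin_apply, mulVec, dotProduct, Matrix.of_apply, ite_mul, zero_mul]
  simp [← funext_iff, Fin.tail_def]

lemma Qop_zero (qm : Fin 2 → Fin 2 → Fin 2 → ℂ) : Qop qm 0 = 0 := by
  ext
  simp [Qop_apply]

lemma update_cons_comp_succAbove_one {L : ℕ} (c t : Fin 2) (x : Fin (L + 1) → Fin 2) :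
    Function.update (fun i => (Fin.cons c x : Fin (L + 2) → Fin 2) (Fin.succAbove 1 i)) 0 t
      = Fin.cons t (Fin.tail x) := by
  funext i
  induction i using Fin.cases with
  | zero => simp
  | succ k => simp [Fin.tail]

lemma update_cons_comp_succAbove_succ {L : ℕ} (c t : Fin 2) (x : Fin (L + 1) → Fin 2)
    (i : Fin L) :
    Function.update
        (fun k => (Fin.cons c x : Fin (L + 2) → Fin 2) (Fin.succAbove i.succ.succ k)) i.succ t
      = Fin.cons c (Function.update (fun m => x (Fin.succAbove i.succ m)) i t) := by
  funext k
  induction k using Fin.cases with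
  | zero => simp [Function.update_of_ne (Fin.succ_ne_zero i).symm]
  | succ m =>
    simp only [Function.update_apply, Fin.succ_inj, Fin.succ_succAbove_succ, Fin.cons_succ]

/-- Expansion of `Q` along the first tensor factor: `Q φ = -(q ⊗ 1) φ - (1 ⊗ Q) φ`. -/
lemma Qop_cons (qm : Fin 2 → Fin 2 → Fin 2 → ℂ) (L : ℕ) (φ : (Fin (L + 1) → Fin 2) → ℂ)
    (c : Fin 2) (x : Fin (L + 1) → Fin 2) :
    Qop qm (L + 1) φ (Fin.cons c x)
      = -(∑ t : Fin 2, qm c (x 0) t * φ (Fin.cons t (Fin.tail x)))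
        - Qop qm L (fun y => φ (Fin.cons c y)) x := by
  rw [Qop_apply, Qop_apply qm L, Fin.sum_univ_succ, sub_eq_add_neg]
  congr 1
  · simp [update_cons_comp_succAbove_one]
  · rw [← Finset.sum_neg_distrib]
    refine Finset.sum_congr rfl fun i _ => ?_
    simp only [update_cons_comp_succAbove_succ, ← Fin.succ_castSucc, Fin.cons_succ,
      Fin.val_succ, pow_succ]
    ring

def contractFirst (w : Fin 2 → ℂ) (L : ℕ) :
    ((Fin (L + 1) → Fin 2) → ℂ) →ₗ[ℂ] ((Fin L → Fin 2) → ℂ) :=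
  ∑ t : Fin 2, w t • LinearMap.funLeft ℂ ℂ (Fin.cons t)

lemma contractFirst_apply (w : Fin 2 → ℂ) (L : ℕ) (φ : (Fin (L + 1) → Fin 2) → ℂ)
    (y : Fin L → Fin 2) :
    contractFirst w L φ y = ∑ t : Fin 2, w t * φ (Fin.cons t y) := by
  simp [contractFirst, LinearMap.funLeft_apply]

lemma contractFirst_comp_Sop (w u : Fin 2 → ℂ) (L : ℕ) :
    contractFirst w L ∘ₗ Sop u L = (w ⬝ᵥ u) • LinearMap.id := by
  refine LinearMap.ext fun ψ => funext fun y => ?_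
  simp [contractFirst_apply, Sop_apply, dotProduct]
  ring

lemma Sop_comp_contractFirst_add {up um w₀ w₁ : Fin 2 → ℂ}
    (hdual : ∀ s t, up s * w₀ t + um s * w₁ t = if s = t then 1 else 0) (L : ℕ) :
    Sop up L ∘ₗ contractFirst w₀ L + Sop um L ∘ₗ contractFirst w₁ L = LinearMap.id := by
  refine LinearMap.ext fun φ => funext fun x => ?_
  have hx : φ x = ∑ t : Fin 2, (if x 0 = t then 1 else 0) * φ (Fin.cons t (Fin.tail x)) := by
    simp
  simp only [LinearMap.add_apply, LinearMap.comp_apply, Pi.add_apply, Sop_apply,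
    contractFirst_apply, LinearMap.id_apply]
  rw [hx, Finset.mul_sum, Finset.mul_sum, ← Finset.sum_add_distrib]
  refine Finset.sum_congr rfl fun t _ => ?_
  rw [← hdual]
  ring

/-- Leibniz rule `Q (u ⊗ ψ) = q u ⊗ ψ - u ⊗ Q ψ`. -/
lemma Qop_Sop_cons (qm : Fin 2 → Fin 2 → Fin 2 → ℂ) (u : Fin 2 → ℂ) (L : ℕ)
    (ψ : (Fin L → Fin 2) → ℂ) (c : Fin 2) (x : Fin (L + 1) → Fin 2) :
    Qop qm (L + 1) (Sop u L ψ) (Fin.cons c x)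
      = -((qm c (x 0) ⬝ᵥ u) * ψ (Fin.tail x)) - u c * Qop qm L ψ x := by
  have hslice : (fun y => Sop u L ψ (Fin.cons c y)) = u c • ψ := by
    funext y
    simp [Sop_apply]
  rw [Qop_cons, hslice, map_smul]
  simp [Sop_apply, dotProduct]
  ring

lemma Sop_comp_Qop {qm : Fin 2 → Fin 2 → Fin 2 → ℂ} {u : Fin 2 → ℂ}
    (hu : ∀ a b, qm a b ⬝ᵥ u = 0) (L : ℕ) :
    Sop u (L + 1) ∘ₗ Qop qm L = -(Qop qm (L + 1) ∘ₗ Sop u L) := by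
  refine LinearMap.ext fun ψ => funext fun s => ?_
  induction s using Fin.consCases with
  | cons c x => simp [Qop_Sop_cons, Sop_apply, hu]

lemma contractFirst_comp_Qop {qm : Fin 2 → Fin 2 → Fin 2 → ℂ} {um w₁ : Fin 2 → ℂ}
    (hqm : ∀ a b t, qm a b t = um a * um b * w₁ t) (w : Fin 2 → ℂ) (L : ℕ) :
    contractFirst w (L + 1) ∘ₗ Qop qm (L + 1)
      = -((w ⬝ᵥ um) • Sop um L ∘ₗ contractFirst w₁ L) - Qop qm L ∘ₗ contractFirst w L := by
  refine LinearMap.ext fun φ => funext fun x => ?_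
  have hslices : contractFirst w L φ = ∑ c : Fin 2, w c • fun y => φ (Fin.cons c y) := by
    funext y
    simp [contractFirst_apply]
  simp only [LinearMap.comp_apply, contractFirst_apply, Qop_cons, LinearMap.sub_apply,
    LinearMap.neg_apply, LinearMap.smul_apply, Pi.sub_apply, Pi.neg_apply, Pi.smul_apply,
    hslices, map_sum, map_smul, Finset.sum_apply, Sop_apply, hqm]
  simp [dotProduct, Fin.sum_univ_two]
  ring

lemma exists_dual_basis {up um : Fin 2 → ℂ} (h : LinearIndependent ℂ ![up, um]) :
    ∃ w₀ w₁ : Fin 2 → ℂ, w₀ ⬝ᵥ up = 1 ∧ w₀ ⬝ᵥ um = 0 ∧ w₁ ⬝ᵥ um = 1 ∧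
      ∀ s t, up s * w₀ t + um s * w₁ t = if s = t then 1 else 0 := by
  set A : Matrix (Fin 2) (Fin 2) ℂ := Matrix.of ![up, um]
  have hA : IsUnit A.det := (Matrix.isUnit_iff_isUnit_det A).mp
    (Matrix.linearIndependent_rows_iff_isUnit.mp h)
  have hright := congr_fun₂ (Matrix.mul_nonsing_inv A hA)
  have hleft := congr_fun₂ (Matrix.nonsing_inv_mul A hA)
  refine ⟨fun t => A⁻¹ t 0, fun t => A⁻¹ t 1, ?_, ?_, ?_, fun s t => ?_⟩
  · simpa [Matrix.mul_apply, dotProduct, mul_comm, A] using hright 0 0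
  · simpa [Matrix.mul_apply, dotProduct, mul_comm, A] using hright 1 0
  · simpa [Matrix.mul_apply, dotProduct, mul_comm, A] using hright 1 1
  · simpa [Matrix.mul_apply, Fin.sum_univ_two, Matrix.one_apply, mul_comm, eq_comm, A]
      using hleft t s

lemma eq_mul_mul_of_dual_basis {qm : Fin 2 → Fin 2 → Fin 2 → ℂ} {up um w₀ w₁ : Fin 2 → ℂ}
    (hup : ∀ a b, qm a b ⬝ᵥ up = 0) (hum : ∀ a b, qm a b ⬝ᵥ um = um a * um b)
    (hdual : ∀ s t, up s * w₀ t + um s * w₁ t = if s = t then 1 else 0) (a b t : Fin 2) :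
    qm a b t = um a * um b * w₁ t := by
  calc qm a b t = ∑ s, qm a b s * (if s = t then 1 else 0) := by simp
    _ = ∑ s, qm a b s * (up s * w₀ t + um s * w₁ t) := by simp only [hdual]
    _ = (qm a b ⬝ᵥ up) * w₀ t + (qm a b ⬝ᵥ um) * w₁ t := by
      simp only [dotProduct, mul_add, Finset.sum_add_distrib, Finset.sum_mul, mul_assoc]
    _ = um a * um b * w₁ t := by rw [hup, hum, zero_mul, zero_add]

section Cohomology

variable {qm : Fin 2 → Fin 2 → Fin 2 → ℂ} {up um w₀ w₁ : Fin 2 → ℂ}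

lemma eq_Qop_of_Sop_eq_Qop (hqm : ∀ a b t, qm a b t = um a * um b * w₁ t)
    (hw₀up : w₀ ⬝ᵥ up = 1) (hw₀um : w₀ ⬝ᵥ um = 0) {L : ℕ} {ψ γ : (Fin (L + 1) → Fin 2) → ℂ}
    (h : Sop up (L + 1) ψ = Qop qm (L + 1) γ) :
    ψ = Qop qm L (-contractFirst w₀ L γ) := by
  have hψ : contractFirst w₀ (L + 1) (Sop up (L + 1) ψ) = ψ := by
    simpa [hw₀up] using LinearMap.congr_fun (contractFirst_comp_Sop w₀ up (L + 1)) ψ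
  have hγ : contractFirst w₀ (L + 1) (Qop qm (L + 1) γ) = -Qop qm L (contractFirst w₀ L γ) := by
    simpa [hw₀um] using LinearMap.congr_fun (contractFirst_comp_Qop hqm w₀ L) γ
  rw [map_neg, ← hψ, h, hγ]

lemma exists_Sop_add_Qop_of_Qop_eq_zero (hqm : ∀ a b t, qm a b t = um a * um b * w₁ t)
    (hw₀um : w₀ ⬝ᵥ um = 0) (hw₁um : w₁ ⬝ᵥ um = 1)
    (hdual : ∀ s t, up s * w₀ t + um s * w₁ t = if s = t then 1 else 0) {L : ℕ}
    {φ : (Fin (L + 1) → Fin 2) → ℂ} (hφ : Qop qm (L + 1) φ = 0) :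
    ∃ ψ γ, Qop qm L ψ = 0 ∧ φ = Sop up L ψ + Qop qm L γ := by
  have hφ₀ : Qop qm L (contractFirst w₀ L φ) = 0 := by
    simpa [hw₀um, hφ] using LinearMap.congr_fun (contractFirst_comp_Qop hqm w₀ L) φ
  have hφ₁ : Sop um L (contractFirst w₁ L φ) = Qop qm L (-contractFirst w₁ L φ) := by
    have := LinearMap.congr_fun (contractFirst_comp_Qop hqm w₁ L) φ
    simp only [hφ, map_zero, hw₁um, one_smul, LinearMap.sub_apply, LinearMap.neg_apply,
      LinearMap.comp_apply] at this
    rw [map_neg, eq_neg_iff_add_eq_zero, ← neg_eq_zero, neg_add', ← this]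
  refine ⟨contractFirst w₀ L φ, -contractFirst w₁ L φ, hφ₀, ?_⟩
  rw [← hφ₁]
  exact (LinearMap.congr_fun (Sop_comp_contractFirst_add hdual L) φ).symm

end Cohomology

/-- in the setting `q u₊ = 0`, `q u₋ = u₋ ⊗ u₋`, the map `S ψ = u₊ ⊗ ψ`
anticommutes with `Q`, hence descends to cohomology (maps kernels to kernels and images
to images), and the induced map `S♯ : H^L → H^{L+1}` is injective and surjective. -/
theorem stmt3 (qm : Fin 2 → Fin 2 → Fin 2 → ℂ) (up um : Fin 2 → ℂ)
    (hbasis : LinearIndependent ℂ ![up, um])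
    (hup : ∀ a b : Fin 2, ∑ t : Fin 2, qm a b t * up t = 0)
    (hum : ∀ a b : Fin 2, ∑ t : Fin 2, qm a b t * um t = um a * um b) :
    -- anticommutation S ∘ Q = - Q ∘ S on V^⊗L for all L ≥ 1
    (∀ L : ℕ, 1 ≤ L →
      (Sop up (L + 1)) ∘ₗ (Qop qm L) = -((Qop qm (L + 1)) ∘ₗ (Sop up L))) ∧
    -- S maps ker Q into ker Q (S♯ lands in cocycles)
    (∀ L : ℕ, 1 ≤ L → ∀ ψ, Qop qm L ψ = 0 → Qop qm (L + 1) (Sop up L ψ) = 0) ∧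
    -- S maps im Q into im Q (S♯ is well defined on classes)
    (∀ L : ℕ, 1 ≤ L → ∀ γ, ∃ γ', Sop up (L + 1) (Qop qm L γ) = Qop qm (L + 1) γ') ∧
    -- injectivity of S♯ at L = 1
    (∀ ψ, Qop qm 1 ψ = 0 → (∃ γ, Sop up 1 ψ = Qop qm 1 γ) → ψ = 0) ∧
    -- injectivity of S♯ at L ≥ 2
    (∀ L : ℕ, 1 ≤ L → ∀ ψ, Qop qm (L + 1) ψ = 0 →
      (∃ γ, Sop up (L + 1) ψ = Qop qm (L + 1) γ) → ∃ γ₀, ψ = Qop qm L γ₀) ∧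
    -- surjectivity of S♯ : H^L → H^{L+1} for all L ≥ 1
    (∀ L : ℕ, 1 ≤ L → ∀ φ, Qop qm (L + 1) φ = 0 →
      ∃ ψ γ, Qop qm L ψ = 0 ∧ φ = Sop up L ψ + Qop qm L γ) := by
  obtain ⟨w₀, w₁, hw₀up, hw₀um, hw₁um, hdual⟩ := exists_dual_basis hbasis
  have hqm := eq_mul_mul_of_dual_basis hup hum hdual
  have hSQ := Sop_comp_Qop hup
  refine ⟨fun L _ => hSQ L, fun L _ ψ hψ => ?_, fun L _ γ => ⟨-Sop up L γ, ?_⟩,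
    fun ψ _ ⟨γ, hγ⟩ => ?_, fun L _ ψ _ ⟨γ, hγ⟩ => ⟨_, eq_Qop_of_Sop_eq_Qop hqm hw₀up hw₀um hγ⟩,
    fun L _ φ hφ => exists_Sop_add_Qop_of_Qop_eq_zero hqm hw₀um hw₁um hdual hφ⟩
  · simpa [hψ] using (LinearMap.congr_fun (hSQ L) ψ).symm
  · simpa using LinearMap.congr_fun (hSQ L) γ
  · simpa [Qop_zero] using eq_Qop_of_Sop_eq_Qop hqm hw₀up hw₀um hγ
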